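/- Let L ≥ 1 be an integer and let x₀, x₁, …, x_L be points in a real inner product space such that ‖x_i‖ = L/2 for all i, ‖x_{i+1} − x_i‖ ≤ L sin(π/(2L)) for 0 ≤ i < L, and x_L = −x₀. Then ‖x_{i+1} − x_i‖ = L sin(π/(2L)) for every 0 ≤ i < L. -/

import Mathlib

open Real InnerProductGeometry

open scoped RealInnerProductSpace

private lemma cos_angle_unit {E : Type*} [NormedAddCommGroup E] [InnerProductSpace ℝ E]
    {a b : E} (ha : ‖a‖ = 1) (hb : ‖b‖ = 1) :
    Real.cos (angle a b) = ⟪a, b⟫ := by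
  rw [cos_angle, ha, hb]; simp

private lemma sin_angle_unit {E : Type*} [NormedAddCommGroup E] [InnerProductSpace ℝ E]
    {a b : E} (ha : ‖a‖ = 1) (hb : ‖b‖ = 1) :
    Real.sin (angle a b) = ‖a - ⟪a, b⟫ • b‖ := by
  have h1 : ‖a - ⟪a, b⟫ • b‖ ^ 2 = 1 - ⟪a, b⟫ ^ 2 := by
    rw [norm_sub_sq_real, real_inner_smul_right, norm_smul, ha, hb]
    rw [Real.norm_eq_abs]
    nlinarith [sq_abs (⟪a, b⟫)]
  rw [Real.sin_eq_sqrt_one_sub_cos_sq (angle_nonneg a b) (angle_le_pi a b),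
    cos_angle_unit ha hb, ← h1, Real.sqrt_sq (norm_nonneg _)]

private lemma angle_triangle_unit {E : Type*} [NormedAddCommGroup E] [InnerProductSpace ℝ E]
    {a b c : E} (ha : ‖a‖ = 1) (hb : ‖b‖ = 1) (hc : ‖c‖ = 1) :
    angle a c ≤ angle a b + angle b c := by
  by_contra h
  push_neg at h
  rcases le_or_gt π (angle a b + angle b c) with hge | hlt
  · exact absurd (lt_of_le_of_lt hge h) (not_lt.2 (angle_le_pi a c))
  have key : Real.cos (angle a b + angle b c) ≤ Real.cos (angle a c) := by
    rw [Real.cos_add, cos_angle_unit ha hc, cos_angle_unit ha hb, cos_angle_unit hb hc,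
      sin_angle_unit ha hb]
    have hsinbc : Real.sin (angle b c) = ‖c - ⟪b, c⟫ • b‖ := by
      rw [angle_comm, sin_angle_unit hc hb, real_inner_comm]
    rw [hsinbc]
    have hinner : ⟪a - ⟪a, b⟫ • b, c - ⟪b, c⟫ • b⟫
        = ⟪a, c⟫ - ⟪a, b⟫ * ⟪b, c⟫ := by
      simp only [inner_sub_left, inner_sub_right, real_inner_smul_left, real_inner_smul_right]
      have h1 : ⟪b, b⟫ = 1 := by
        rw [real_inner_self_eq_norm_sq, hb]; norm_num
      rw [real_inner_comm b a, real_inner_comm c b] at *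
      rw [h1]; ring
    have habs := abs_real_inner_le_norm (a - ⟪a, b⟫ • b) (c - ⟪b, c⟫ • b)
    rw [hinner] at habs
    have := neg_abs_le (⟪a, c⟫ - ⟪a, b⟫ * ⟪b, c⟫)
    nlinarith [abs_nonneg (⟪a, c⟫ - ⟪a, b⟫ * ⟪b, c⟫)]
  have hcos := Real.strictAntiOn_cos
    ⟨add_nonneg (angle_nonneg a b) (angle_nonneg b c), hlt.le⟩
    ⟨angle_nonneg a c, angle_le_pi a c⟩ h
  linarith

theorem stmt_13 {E : Type*} [NormedAddCommGroup E] [InnerProductSpace ℝ E]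
    (L : ℕ) (hL : 1 ≤ L) (x : ℕ → E)
    (hsphere : ∀ i ≤ L, ‖x i‖ = (L : ℝ) / 2)
    (hstep : ∀ i < L, ‖x (i + 1) - x i‖ ≤ (L : ℝ) * Real.sin (π / (2 * L)))
    (hanti : x L = -x 0) :
    ∀ i < L, ‖x (i + 1) - x i‖ = (L : ℝ) * Real.sin (π / (2 * L)) := by
  have hLpos : (0 : ℝ) < L := by exact_mod_cast hL
  set r : ℝ := (L : ℝ) / 2 with hr
  have hrpos : 0 < r := by positivity
  set u : ℕ → E := fun i => r⁻¹ • x i with hu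
  have hunit : ∀ i ≤ L, ‖u i‖ = 1 := by
    intro i hi
    rw [hu]
    simp only [norm_smul, Real.norm_eq_abs, abs_of_pos (inv_pos.2 hrpos), hsphere i hi]
    field_simp
  have hxne : ∀ i ≤ L, x i ≠ 0 := by
    intro i hi h
    have h0 := hsphere i hi
    rw [h, norm_zero] at h0
    linarith
  have hangle_eq : ∀ i j, angle (u i) (u j) = angle (x i) (x j) := by
    intro i j
    exact angle_smul_smul (inv_ne_zero hrpos.ne') _ _
  set α : ℕ → ℝ := fun i => angle (x i) (x (i + 1)) with hα
  -- half-angle identity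
  have hhalf : Real.cos (π / L) = 1 - 2 * Real.sin (π / (2 * L)) ^ 2 := by
    have h2 : π / (L : ℝ) = 2 * (π / (2 * L)) := by field_simp
    rw [h2, Real.cos_two_mul]
    have := Real.sin_sq_add_cos_sq (π / (2 * (L : ℝ)))
    nlinarith
  have hsin_nonneg : 0 ≤ Real.sin (π / (2 * L)) := by
    apply Real.sin_nonneg_of_nonneg_of_le_pi
    · positivity
    · rw [div_le_iff₀ (by positivity)]
      nlinarith [Real.pi_pos, (by exact_mod_cast hL : (1:ℝ) ≤ L)]
  -- inner product bound on each step
  have hinner_eq : ∀ i < L, ⟪x i, x (i + 1)⟫ = r ^ 2 * Real.cos (α i) := by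
    intro i hi
    have hc := cos_angle (x i) (x (i + 1))
    rw [hsphere i hi.le, hsphere (i + 1) hi] at hc
    rw [hα]
    rw [hc]
    field_simp
  have hdist_sq : ∀ i < L, ‖x (i + 1) - x i‖ ^ 2 = 2 * r ^ 2 - 2 * ⟪x i, x (i + 1)⟫ := by
    intro i hi
    rw [norm_sub_sq_real, hsphere i hi.le, hsphere (i + 1) hi, real_inner_comm]
    ring
  have hαle : ∀ i < L, α i ≤ π / L := by
    intro i hi
    by_contra h
    push_neg at h
    have hcoslt : Real.cos (α i) < Real.cos (π / L) := by
      apply Real.strictAntiOn_cos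
      · constructor
        · positivity
        · rw [div_le_iff₀ hLpos]
          nlinarith [Real.pi_pos, (by exact_mod_cast hL : (1:ℝ) ≤ L)]
      · exact ⟨angle_nonneg _ _, angle_le_pi _ _⟩
      · exact h
    have h1 := hstep i hi
    have h2 := hdist_sq i hi
    have h3 := hinner_eq i hi
    have h4 : ‖x (i + 1) - x i‖ ^ 2 ≤ ((L : ℝ) * Real.sin (π / (2 * L))) ^ 2 := by
      apply sq_le_sq' _ h1
      nlinarith [norm_nonneg (x (i + 1) - x i)]
    rw [h2, h3] at h4
    rw [hhalf] at hcoslt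
    have h7 : 4 * r ^ 2 = (L : ℝ) ^ 2 := by rw [hr]; ring
    have h6 := mul_lt_mul_of_pos_left hcoslt (by positivity : (0:ℝ) < 2 * r ^ 2)
    nlinarith [h4, h6, h7, sq_nonneg (Real.sin (π / (2 * L)))]
  -- triangle inequality chain
  have hchain : ∀ n ≤ L, angle (x 0) (x n) ≤ ∑ i ∈ Finset.range n, α i := by
    intro n
    induction n with
    | zero =>
      intro _
      simp [angle_self (hxne 0 (Nat.zero_le L))]
    | succ n ih =>
      intro hn
      have hn'' : n ≤ L := Nat.le_of_succ_le hn
      calc angle (x 0) (x (n + 1)) = angle (u 0) (u (n + 1)) := (hangle_eq 0 (n + 1)).symm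
        _ ≤ angle (u 0) (u n) + angle (u n) (u (n + 1)) :=
            angle_triangle_unit (hunit 0 (Nat.zero_le L)) (hunit n hn'') (hunit (n + 1) hn)
        _ = angle (x 0) (x n) + α n := by rw [hangle_eq 0 n, hangle_eq n (n + 1)]
        _ ≤ (∑ i ∈ Finset.range n, α i) + α n := by linarith [ih hn'']
        _ = ∑ i ∈ Finset.range (n + 1), α i := (Finset.sum_range_succ α n).symm
  have hpi_le : π ≤ ∑ i ∈ Finset.range L, α i := by
    have := hchain L le_rfl
    rwa [hanti, angle_neg_right, angle_self (hxne 0 (Nat.zero_le L)), sub_zero] at this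
  -- each angle is exactly π / L
  have hαeq : ∀ i < L, α i = π / L := by
    intro i hi
    refine le_antisymm (hαle i hi) ?_
    by_contra h
    push_neg at h
    have hlt : ∑ j ∈ Finset.range L, α j < ∑ _j ∈ Finset.range L, π / L := by
      apply Finset.sum_lt_sum
      · intro j hj
        exact hαle j (Finset.mem_range.1 hj)
      · exact ⟨i, Finset.mem_range.2 hi, h⟩
    rw [Finset.sum_const, Finset.card_range, nsmul_eq_mul] at hlt
    rw [mul_div_cancel₀ _ hLpos.ne'] at hlt
    linarith
  intro i hi
  have h2 := hdist_sq i hi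
  have h3 := hinner_eq i hi
  rw [hαeq i hi] at h3
  have hsq : ‖x (i + 1) - x i‖ ^ 2 = ((L : ℝ) * Real.sin (π / (2 * L))) ^ 2 := by
    rw [h2, h3, hhalf, hr]
    ring
  calc ‖x (i + 1) - x i‖ = Real.sqrt (‖x (i + 1) - x i‖ ^ 2) :=
        (Real.sqrt_sq (norm_nonneg _)).symm
    _ = Real.sqrt (((L : ℝ) * Real.sin (π / (2 * L))) ^ 2) := by rw [hsq]
    _ = (L : ℝ) * Real.sin (π / (2 * L)) := Real.sqrt_sq (by positivity)
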